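/- arXiv:2311.04837 — 4 statements merged into one kernel-verified Lean document; each statement's English description precedes it below -/
import Mathlib

section
/- Let n ≥ 1 and let X be a nonempty type of auxiliary values. Suppose p_k, p̂_k : ℝ → X → ℝ (k ∈ Fin n) are coordinate densities that are strictly positive and C² in their first argument, and h : (Fin n → ℝ) → (Fin n → ℝ) is a bijection that is C² with C² inverse such that for every x ∈ X the pushforward under h of the measure (volume on Fin n → ℝ).withDensity (s ↦ ENNReal.ofReal (∏_k p_k (s k) x)) equals (volume on Fin n → ℝ).withDensity (s ↦ ENNReal.ofReal (∏_k p̂_k (s k) x)). For s : Fin n → ℝ and x ∈ X define w(s,x) ∈ Fin (2n) → ℝ by w(s,x)_k = (first derivative of t ↦ log (p_k t x)) evaluated at s k for k < n, and w(s,x)_{n+k} = (second derivative of t ↦ log (p_k t x)) evaluated at s k for k < n. Assume that for every s there exist x₀, x₁, …, x_{2n} ∈ X such that the 2n vectors w(s,x_j) − w(s,x₀), j = 1,…,2n, are linearly independent in Fin (2n) → ℝ. Then there exist a permutation σ of Fin n and injective functions φ_k : ℝ → ℝ such that h(s) k = φ_k (s (σ k)) for every s : Fin n → ℝ and every k ∈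 Fin n. -/
/-!
Write `g = h⁻¹` and `q_k = log p_k`. By the change of variables formula and continuity of the
densities, `∏ p_k (s k) x = |det Dh(s)| · ∏ p'_k (h(s) k) x` for every `s`. Taking logarithms
and subtracting the same identity at a second auxiliary value `y` eliminates the Jacobian, so
`s ↦ ∑ₖ (q_k (g(s) k) x - q_k (g(s) k) y)` is a sum of functions of single coordinates and its
mixed partials `∂ᵢ∂ⱼ` (`i ≠ j`) vanish. By the chain rule this says that
`w(g s, x) - w(g s, y)` is orthogonal to the vector `(∂ᵢ∂ⱼ g_k, ∂ᵢg_k ∂ⱼg_k)ₖ`, which (A3) forces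
to be zero. Hence each row of the Jacobian of `g` has at most one nonzero entry; as the Jacobian
is invertible and continuous and `ℝⁿ` is connected, the column of that entry is a fixed
permutation of the rows, so `g`, and with it `h`, acts coordinatewise.
-/

open MeasureTheory Function

section ChangeOfVariables

variable {E : Type*} [NormedAddCommGroup E] [NormedSpace ℝ E] [FiniteDimensional ℝ E]
  [MeasurableSpace E] [BorelSpace E] (μ : Measure E) [μ.IsAddHaarMeasure]

theorem withDensity_eq_withDensity_abs_det_fderiv_mul_of_map_withDensity_eq {f : E → E}
    (hf : Differentiable ℝ f) (hinj : Injective f) {F G : E → ENNReal}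
    (hmap : Measure.map f (μ.withDensity F) = μ.withDensity G) :
    μ.withDensity F =
      μ.withDensity fun x => ENNReal.ofReal |(fderiv ℝ f x).det| * G (f x) := by
  have hf' : ∀ s : Set E, ∀ x ∈ s, HasFDerivWithinAt f (fderiv ℝ f x) s x :=
    fun _ x _ => (hf x).hasFDerivAt.hasFDerivWithinAt
  ext s hs
  have himage := measurable_image_of_fderivWithin hs (hf' s) hinj.injOn
  rw [withDensity_apply _ hs, withDensity_apply _ hs,
    ← lintegral_image_eq_lintegral_abs_det_fderiv_mul μ hs (hf' s) hinj.injOn,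
    ← withDensity_apply _ himage, ← hmap, Measure.map_apply hf.continuous.measurable himage,
    hinj.preimage_image, withDensity_apply _ hs]

theorem eq_of_withDensity_eq_of_continuous {α : Type*} [TopologicalSpace α] [MeasurableSpace α]
    [OpensMeasurableSpace α] {ν : Measure α} [ν.IsOpenPosMeasure] [SigmaFinite ν]
    {F G : α → ENNReal} (hF : Continuous F) (hG : Continuous G)
    (h : ν.withDensity F = ν.withDensity G) : F = G :=
  (hF.ae_eq_iff_eq ν hG).mp <| (withDensity_eq_iff_of_sigmaFinite hF.measurable.aemeasurable
    hG.measurable.aemeasurable).mp h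

theorem eq_abs_det_fderiv_mul_of_map_withDensity_eq {f : E → E} (hf : ContDiff ℝ 1 f)
    (hinj : Injective f) {F G : E → ℝ} (hF : Continuous F) (hG : Continuous G)
    (hF₀ : 0 ≤ F) (hG₀ : 0 ≤ G)
    (hmap : Measure.map f (μ.withDensity fun x => ENNReal.ofReal (F x)) =
      μ.withDensity fun x => ENNReal.ofReal (G x)) (x : E) :
    F x = |(fderiv ℝ f x).det| * G (f x) := by
  have hdet : Continuous fun x => |(fderiv ℝ f x).det| :=
    (ContinuousLinearMap.continuous_det.comp (hf.continuous_fderiv one_ne_zero)).abs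
  have hdens : (fun x => ENNReal.ofReal (F x)) =
      fun x => ENNReal.ofReal (|(fderiv ℝ f x).det| * G (f x)) := by
    refine eq_of_withDensity_eq_of_continuous (ν := μ) (ENNReal.continuous_ofReal.comp hF)
      (ENNReal.continuous_ofReal.comp (hdet.mul (hG.comp hf.continuous))) ?_
    rw [withDensity_eq_withDensity_abs_det_fderiv_mul_of_map_withDensity_eq μ
      (hf.differentiable one_ne_zero) hinj hmap]
    simp only [ENNReal.ofReal_mul (abs_nonneg _)]
  exact (ENNReal.ofReal_eq_ofReal_iff (hF₀ x) (mul_nonneg (abs_nonneg _) (hG₀ _))).mp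
    (congrFun hdens x)

end ChangeOfVariables

theorem sum_log_sub_log_eq_of_prod_eq_mul_prod {ι : Type*} [Fintype ι] {a b a' b' : ι → ℝ}
    {d : ℝ} (ha : ∀ k, 0 < a k) (hb : ∀ k, 0 < b k) (ha' : ∀ k, 0 < a' k)
    (hb' : ∀ k, 0 < b' k) (had : ∏ k, a k = d * ∏ k, a' k) (hbd : ∏ k, b k = d * ∏ k, b' k) :
    ∑ k, (Real.log (a k) - Real.log (b k)) = ∑ k, (Real.log (a' k) - Real.log (b' k)) := by
  have hd : d ≠ 0 := left_ne_zero_of_mul (had ▸ (Finset.prod_pos fun k _ => ha k).ne')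
  have hlog : ∀ c : ι → ℝ, (∀ k, 0 < c k) → Real.log (∏ k, c k) = ∑ k, Real.log (c k) :=
    fun c hc => Real.log_prod fun k _ => (hc k).ne'
  have hprod : ∀ c : ι → ℝ, (∀ k, 0 < c k) → (∏ k, c k) ≠ 0 :=
    fun c hc => (Finset.prod_pos fun k _ => hc k).ne'
  have hA := congrArg Real.log had
  have hB := congrArg Real.log hbd
  rw [Real.log_mul hd (hprod a' ha'), hlog a ha, hlog a' ha'] at hA
  rw [Real.log_mul hd (hprod b' hb'), hlog b hb, hlog b' hb'] at hB
  rw [Finset.sum_sub_distrib, Finset.sum_sub_distrib, hA, hB]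
  ring

theorem sum_log_sub_log_comp_eq_of_map_withDensity_eq {ι X : Type*} [Fintype ι]
    {p p' : ι → ℝ → X → ℝ} (hp_pos : ∀ k t x, 0 < p k t x) (hp'_pos : ∀ k t x, 0 < p' k t x)
    (hp : ∀ k x, Continuous fun t => p k t x) (hp' : ∀ k x, Continuous fun t => p' k t x)
    {h g : (ι → ℝ) → ι → ℝ} (hh : ContDiff ℝ 1 h) (hgh : LeftInverse g h)
    (hhg : RightInverse g h)
    (hmatch : ∀ x, Measure.map h (volume.withDensity fun s => ENNReal.ofReal (∏ k, p k (s k) x)) =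
      volume.withDensity fun s => ENNReal.ofReal (∏ k, p' k (s k) x))
    (x y : X) (s : ι → ℝ) :
    ∑ k, (Real.log (p k (g s k) x) - Real.log (p k (g s k) y)) =
      ∑ k, (Real.log (p' k (s k) x) - Real.log (p' k (s k) y)) := by
  have hdensity : ∀ x s, ∏ k, p k (s k) x = |(fderiv ℝ h s).det| * ∏ k, p' k (h s k) x :=
    fun x => eq_abs_det_fderiv_mul_of_map_withDensity_eq volume hh hgh.injective
      (continuous_finsetProd _ fun k _ => (hp k x).comp (continuous_apply k))
      (continuous_finsetProd _ fun k _ => (hp' k x).comp (continuous_apply k))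
      (fun s => Finset.prod_nonneg fun k _ => (hp_pos k _ x).le)
      (fun s => Finset.prod_nonneg fun k _ => (hp'_pos k _ x).le) (hmatch x)
  simpa only [hhg s] using sum_log_sub_log_eq_of_prod_eq_mul_prod (fun k => hp_pos k _ x)
    (fun k => hp_pos k _ y) (fun k => hp'_pos k _ x) (fun k => hp'_pos k _ y)
    (hdensity x (g s)) (hdensity y (g s))

section Inverse

variable {E F : Type*} [NormedAddCommGroup E] [NormedSpace ℝ E] [NormedAddCommGroup F]
  [NormedSpace ℝ F]

theorem fderiv_comp_fderiv_eq_id_of_leftInverse {f : E → F} {f' : F → E} {x : E}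
    (hf' : DifferentiableAt ℝ f' (f x)) (hf : DifferentiableAt ℝ f x) (hinv : LeftInverse f' f) :
    (fderiv ℝ f' (f x)).comp (fderiv ℝ f x) = ContinuousLinearMap.id ℝ E := by
  have hcomp := hf'.hasFDerivAt.comp x hf.hasFDerivAt
  rw [hinv.comp_eq_id] at hcomp
  exact hcomp.unique (hasFDerivAt_id x)

theorem bijective_fderiv_of_leftInverse_of_rightInverse {f : E → F} {f' : F → E}
    (hf : Differentiable ℝ f) (hf' : Differentiable ℝ f') (hleft : LeftInverse f' f)
    (hright : RightInverse f' f) (y : F) : Bijective (fderiv ℝ f' y) := by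
  constructor
  · refine LeftInverse.injective (g := fderiv ℝ f (f' y)) fun v => ?_
    exact congrArg (· v) (fderiv_comp_fderiv_eq_id_of_leftInverse (hf _) (hf' y) hright)
  · have hid := fderiv_comp_fderiv_eq_id_of_leftInverse (hf' _) (hf (f' y)) hleft
    rw [hright y] at hid
    exact fun v => ⟨fderiv ℝ f (f' y) v, congrArg (· v) hid⟩

end Inverse

theorem eq_zero_of_dotProduct_eq_zero_of_linearIndependent {ι : Type*} [Fintype ι]
    {b : ι → ι → ℝ} (hb : LinearIndependent ℝ b) {v : ι → ℝ} (hv : ∀ j, b j ⬝ᵥ v = 0) :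
    v = 0 := by
  have hspan := hb.span_eq_top_of_card_eq_finrank' (by simp)
  refine dotProduct_eq_zero v fun u => ?_
  have hu : u ∈ Submodule.span ℝ (Set.range b) := hspan ▸ Submodule.mem_top
  rw [dotProduct_comm]
  refine Submodule.span_induction ?_ ?_ ?_ ?_ hu
  · rintro _ ⟨j, rfl⟩; exact hv j
  · simp
  · intro x y _ _ hx hy; simp [add_dotProduct, hx, hy]
  · intro c x _ hx; simp [smul_dotProduct, hx]

theorem eq_zero_of_forall_sum_sub_mul_eq_zero {n : ℕ} {X : Type*} {w : X → Fin (2 * n) → ℝ}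
    (hw : ∃ x : Fin (2 * n + 1) → X,
      LinearIndependent ℝ fun j : Fin (2 * n) => w (x j.succ) - w (x 0))
    {a b : Fin n → ℝ}
    (h : ∀ x y, ∑ k : Fin n,
      ((w x ⟨k, k.val_lt_of_le (Nat.le_mul_of_pos_left n two_pos)⟩ -
          w y ⟨k, k.val_lt_of_le (Nat.le_mul_of_pos_left n two_pos)⟩) * a k +
        (w x ⟨n + k, (Nat.add_lt_add_left k.isLt n).trans_eq (two_mul n).symm⟩ -
          w y ⟨n + k, (Nat.add_lt_add_left k.isLt n).trans_eq (two_mul n).symm⟩) * b k) = 0) :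
    a = 0 ∧ b = 0 := by
  obtain ⟨x, hx⟩ := hw
  let e : Fin n ⊕ Fin n ≃ Fin (2 * n) := finSumFinEquiv.trans (finCongr (two_mul n).symm)
  have he : ∀ k, e (.inl k) = ⟨k, by omega⟩ ∧ e (.inr k) = ⟨n + k, by omega⟩ := fun k =>
    ⟨Fin.ext rfl, Fin.ext rfl⟩
  have hv : Sum.elim a b ∘ e.symm = 0 := by
    refine eq_zero_of_dotProduct_eq_zero_of_linearIndependent hx fun j => ?_
    rw [dotProduct, ← e.sum_comp, Fintype.sum_sum_type, ← Finset.sum_add_distrib]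
    simp only [Pi.sub_apply, comp_apply, e.symm_apply_apply, Sum.elim_inl, Sum.elim_inr]
    simpa only [he] using h (x j.succ) (x 0)
  constructor <;> funext k
  · simpa using congrFun hv (e (.inl k))
  · simpa using congrFun hv (e (.inr k))

theorem deriv_deriv_fun_sub {f f₀ : ℝ → ℝ} (hf : ContDiff ℝ 2 f) (hf₀ : ContDiff ℝ 2 f₀) (t : ℝ) :
    deriv (deriv fun u => f u - f₀ u) t = deriv (deriv f) t - deriv (deriv f₀) t := by
  have hiter : ∀ F : ℝ → ℝ, deriv (deriv F) = iteratedDeriv 2 F := fun F => by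
    rw [iteratedDeriv_succ, iteratedDeriv_one]
  simp only [hiter]
  exact iteratedDeriv_fun_sub hf.contDiffAt hf₀.contDiffAt

section CoordinateDerivatives

variable {ι : Type*} [Fintype ι] [DecidableEq ι]

theorem DifferentiableAt.hasDerivAt_comp_update {F : Type*} [NormedAddCommGroup F]
    [NormedSpace ℝ F] {g : (ι → ℝ) → F} {s : ι → ℝ} (hg : DifferentiableAt ℝ g s) (i : ι) :
    HasDerivAt (fun u => g (update s i u)) (fderiv ℝ g s (Pi.single i 1)) (s i) :=
  hg.hasFDerivAt.comp_hasDerivAt_of_eq (s i) (hasDerivAt_update s i (s i))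
    (update_eq_self i s).symm

theorem sum_deriv_mul_fderiv_single_eq_deriv {g : (ι → ℝ) → ι → ℝ} (hg : Differentiable ℝ g)
    {α β : ι → ℝ → ℝ} (hα : ∀ k, Differentiable ℝ (α k)) (hβ : ∀ k, Differentiable ℝ (β k))
    (hsep : ∀ s, ∑ k, β k (g s k) = ∑ k, α k (s k)) (s : ι → ℝ) (i : ι) :
    ∑ k, deriv (β k) (g s k) * fderiv ℝ g s (Pi.single i 1) k = deriv (α i) (s i) := by
  have hβline : HasDerivAt (fun u => ∑ k, β k (g (update s i u) k))
      (∑ k, deriv (β k) (g s k) * fderiv ℝ g s (Pi.single i 1) k) (s i) :=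
    HasDerivAt.fun_sum fun k _ => (hβ k _).hasDerivAt.comp_of_eq (s i)
      (hasDerivAt_pi.mp ((hg s).hasDerivAt_comp_update i) k) (by rw [update_eq_self])
  have hαline : HasDerivAt (fun u => ∑ k, α k (update s i u k)) (deriv (α i) (s i)) (s i) := by
    have hsum := HasDerivAt.fun_sum (u := Finset.univ) fun k _ =>
      (hα k (s k)).hasDerivAt.comp_of_eq (s i) (hasDerivAt_pi.mp (hasDerivAt_update s i (s i)) k)
        (by rw [update_eq_self])
    simpa [Pi.single_apply] using hsum
  simp only [hsep] at hβline
  exact hβline.unique hαline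

theorem sum_mixed_partials_eq_zero {g : (ι → ℝ) → ι → ℝ} (hg : ContDiff ℝ 2 g)
    {α β : ι → ℝ → ℝ} (hα : ∀ k, Differentiable ℝ (α k)) (hβ : ∀ k, ContDiff ℝ 2 (β k))
    (hsep : ∀ s, ∑ k, β k (g s k) = ∑ k, α k (s k)) (s : ι → ℝ) {i j : ι} (hij : i ≠ j) :
    ∑ k, (deriv (deriv (β k)) (g s k) * fderiv ℝ g s (Pi.single j 1) k *
        fderiv ℝ g s (Pi.single i 1) k +
      deriv (β k) (g s k) * deriv (fun v => fderiv ℝ g (update s j v) (Pi.single i 1) k) (s j))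
      = 0 := by
  have hg₁ : Differentiable ℝ g := hg.differentiable two_ne_zero
  have hpartial : ∀ k, DifferentiableAt ℝ
      (fun v => fderiv ℝ g (update s j v) (Pi.single i 1) k) (s j) := by
    have hD : Differentiable ℝ (fderiv ℝ g) :=
      (hg.fderiv_right (by norm_num)).differentiable one_ne_zero
    have hline : Differentiable ℝ (update s j) :=
      fun v => (hasDerivAt_update s j v).differentiableAt
    fun_prop
  have hprod := HasDerivAt.fun_sum (u := Finset.univ) fun k _ =>
    (((hβ k).differentiable_deriv_two _).hasDerivAt.comp_of_eq (s j)
      (hasDerivAt_pi.mp ((hg₁ s).hasDerivAt_comp_update j) k)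
      (by rw [update_eq_self])).fun_mul (hpartial k).hasDerivAt
  have hconst : (fun v => ∑ k, deriv (β k) (g (update s j v) k) *
      fderiv ℝ g (update s j v) (Pi.single i 1) k) = fun _ => deriv (α i) (s i) := by
    funext v
    rw [sum_deriv_mul_fderiv_single_eq_deriv hg₁ hα
      (fun k => (hβ k).differentiable two_ne_zero) hsep, update_of_ne hij]
  simp only [comp_def, update_eq_self, hconst] at hprod
  exact hprod.unique (hasDerivAt_const _ _)

theorem ContinuousLinearMap.apply_eq_sum_mul_single {ι' : Type*}
    (T : (ι → ℝ) →L[ℝ] (ι' → ℝ)) (v : ι → ℝ) (k : ι') :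
    T v k = ∑ j, v j * T (Pi.single j 1) k := by
  conv_lhs => rw [← Finset.univ_sum_single v]
  refine (congrFun (map_sum T _ _) k).trans ?_
  refine (Finset.sum_apply k _ _).trans (Finset.sum_congr rfl fun j _ => ?_)
  have hsingle : Pi.single j (v j) = v j • (Pi.single j 1 : ι → ℝ) := by
    rw [← Pi.single_smul', smul_eq_mul, mul_one]
  rw [hsingle, map_smul, Pi.smul_apply, smul_eq_mul]

theorem apply_eq_of_fderiv_single_apply_eq_zero {ι' : Type*} [Fintype ι']
    {g : (ι → ℝ) → ι' → ℝ} (hg : Differentiable ℝ g) {i : ι} {k : ι'}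
    (h0 : ∀ s j, j ≠ i → fderiv ℝ g s (Pi.single j 1) k = 0) {s s' : ι → ℝ}
    (hs : s i = s' i) : g s k = g s' k := by
  have hline : ∀ t : ℝ, HasDerivAt (fun t => g (s + t • (s' - s)) k) 0 t := by
    intro t
    have hderiv := hasDerivAt_pi.mp ((hg _).hasFDerivAt.comp_hasDerivAt t
      (((hasDerivAt_id t).smul_const (s' - s)).const_add s)) k
    simp only [one_smul, comp_def, id] at hderiv
    rwa [ContinuousLinearMap.apply_eq_sum_mul_single, Finset.sum_eq_zero fun j _ => ?_] at hderiv
    by_cases hj : j = i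
    · simp [hj, hs]
    · simp [h0 _ j hj]
  simpa using is_const_of_deriv_eq_zero (fun t => (hline t).differentiableAt)
    (fun t => (hline t).deriv) 0 1

theorem exists_perm_apply_eq_of_fderiv_single_mul_eq_zero {g : (ι → ℝ) → ι → ℝ}
    (hg : ContDiff ℝ 1 g) (hbij : ∀ s, Bijective (fderiv ℝ g s))
    (hrow : ∀ s i j, i ≠ j → ∀ k,
      fderiv ℝ g s (Pi.single i 1) k * fderiv ℝ g s (Pi.single j 1) k = 0) :
    ∃ σ : Equiv.Perm ι, ∀ s s' k, s (σ k) = s' (σ k) → g s k = g s' k := by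
  have hex : ∀ s k, ∃ j, fderiv ℝ g s (Pi.single j 1) k ≠ 0 := by
    intro s k
    by_contra! hzero
    obtain ⟨v, hv⟩ := (hbij s).2 (Pi.single k 1)
    have hk := ContinuousLinearMap.apply_eq_sum_mul_single (fderiv ℝ g s) v k
    simp [hv, hzero] at hk
  choose τ hτ using hex
  have huniq : ∀ s k j, fderiv ℝ g s (Pi.single j 1) k ≠ 0 → j = τ s k := fun s k j hj => by
    by_contra hne
    exact mul_ne_zero hj (hτ s k) (hrow s j (τ s k) hne k)
  have hconst : ∀ s k, τ s k = τ 0 k := by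
    intro s k
    refine IsLocallyConstant.apply_eq_of_preconnectedSpace
      ((IsLocallyConstant.iff_eventually_eq (τ · k)).mpr fun s₀ => ?_) s 0
    have hcont : Continuous fun s => fderiv ℝ g s (Pi.single (τ s₀ k) 1) k := by
      have := hg.continuous_fderiv one_ne_zero
      fun_prop
    filter_upwards [hcont.continuousAt.eventually_ne (hτ s₀ k)] with s hs
    exact (huniq s k _ hs).symm
  have hsurj : Surjective (τ 0) := by
    intro j
    by_contra! hj
    have hzero : fderiv ℝ g 0 (Pi.single j 1) = fderiv ℝ g 0 0 := by
      funext k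
      by_contra hk
      exact hj k (huniq 0 k j (by simpa using hk)).symm
    simpa using (hbij 0).1 hzero
  refine ⟨Equiv.ofBijective (τ 0) hsurj.bijective_of_finite, fun s s' k hs => ?_⟩
  refine apply_eq_of_fderiv_single_apply_eq_zero (hg.differentiable one_ne_zero)
    (fun x j hj => ?_) hs
  by_contra hne
  exact hj (by simpa [hconst] using huniq x k j hne)

end CoordinateDerivatives

theorem exists_injective_apply_eq_of_leftInverse {ι α β : Type*} [DecidableEq ι]
    {g : (ι → α) → ι → β} {h : (ι → β) → ι → α} (hgh : LeftInverse g h)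
    (hhg : RightInverse g h) (σ : Equiv.Perm ι)
    (hσ : ∀ s s' k, s (σ k) = s' (σ k) → g s k = g s' k) :
    ∃ φ : ι → β → α, (∀ k, Injective (φ k)) ∧ ∀ s k, h s k = φ k (s (σ.symm k)) := by
  have hdep : ∀ s s' k, s (σ.symm k) = s' (σ.symm k) → h s k = h s' k := by
    intro s s' k hs
    have hk : σ (σ.symm k) = k := σ.apply_symm_apply k
    have hupdate : g (update (h s) k (h s' k)) = g (h s) := by
      funext m
      by_cases hm : m = σ.symm k
      · subst hm
        rw [hσ _ (h s') _ (by rw [hk, update_self]), hgh, hgh, hs]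
      · exact hσ _ _ _ (update_of_ne (fun h' => hm (σ.injective (h'.trans hk.symm))) _ _)
    simpa using (congrFun (hhg.injective hupdate) k).symm
  refine ⟨fun k b => h (fun _ => b) k, fun k b b' hbb' => ?_, fun s k => hdep _ _ _ rfl⟩
  have := hσ (h fun _ => b) (h fun _ => b') (σ.symm k) (by simpa using hbb')
  simpa only [hgh _] using this

/-- Theorem 1 of the paper (component-wise identifiability of the atom latent
variables), reduced to the indeterminacy transformation `h`: matched
factorized conditional densities transported by a `C²` diffeomorphism,
together with the linear-independence assumption (A3) on the vector `w` of
first and second log-density derivatives, force `h` to be a permutation of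
coordinates composed with component-wise injective maps. -/
theorem componentwise_identifiability
    (n : ℕ)
    (X : Type*)
    (p p' : Fin n → ℝ → X → ℝ)
    (hp_pos : ∀ (k : Fin n) (t : ℝ) (x : X), 0 < p k t x)
    (hp'_pos : ∀ (k : Fin n) (t : ℝ) (x : X), 0 < p' k t x)
    (hp_smooth : ∀ (k : Fin n) (x : X), ContDiff ℝ 2 (fun t => p k t x))
    (hp'_smooth : ∀ (k : Fin n) (x : X), ContDiff ℝ 2 (fun t => p' k t x))
    (h : (Fin n → ℝ) → (Fin n → ℝ))
    (hC2 : ContDiff ℝ 2 h)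
    (g : (Fin n → ℝ) → (Fin n → ℝ))
    (hg : Function.LeftInverse g h ∧ Function.RightInverse g h)
    (hgC2 : ContDiff ℝ 2 g)
    (hmatch : ∀ x : X,
      Measure.map h
          ((volume : Measure (Fin n → ℝ)).withDensity
            fun s => ENNReal.ofReal (∏ k : Fin n, p k (s k) x)) =
        (volume : Measure (Fin n → ℝ)).withDensity
          fun s => ENNReal.ofReal (∏ k : Fin n, p' k (s k) x))
    (w : (Fin n → ℝ) → X → Fin (2 * n) → ℝ)
    (hw1 : ∀ (s : Fin n → ℝ) (x : X) (k : Fin n),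
      w s x ⟨k.val, by omega⟩ =
        deriv (fun t => Real.log (p k t x)) (s k))
    (hw2 : ∀ (s : Fin n → ℝ) (x : X) (k : Fin n),
      w s x ⟨n + k.val, by omega⟩ =
        deriv (deriv (fun t => Real.log (p k t x))) (s k))
    (hA3 : ∀ s : Fin n → ℝ, ∃ x : Fin (2 * n + 1) → X,
      LinearIndependent ℝ (fun j : Fin (2 * n) => w s (x j.succ) - w s (x 0))) :
    ∃ (σ : Equiv.Perm (Fin n)) (φ : Fin n → ℝ → ℝ),
      (∀ k : Fin n, Function.Injective (φ k)) ∧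
      ∀ (s : Fin n → ℝ) (k : Fin n), h s k = φ k (s (σ k)) := by
  obtain ⟨hgh, hhg⟩ := hg
  have hlog : ∀ k x, ContDiff ℝ 2 fun t => Real.log (p k t x) :=
    fun k x => (hp_smooth k x).log fun t => (hp_pos k t x).ne'
  have hlog' : ∀ k x, ContDiff ℝ 2 fun t => Real.log (p' k t x) :=
    fun k x => (hp'_smooth k x).log fun t => (hp'_pos k t x).ne'
  have hsep := sum_log_sub_log_comp_eq_of_map_withDensity_eq hp_pos hp'_pos
    (fun k x => (hp_smooth k x).continuous) (fun k x => (hp'_smooth k x).continuous)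
    (hC2.of_le one_le_two) hgh hhg hmatch
  have hrow : ∀ s i j, i ≠ j → ∀ k,
      fderiv ℝ g s (Pi.single i 1) k * fderiv ℝ g s (Pi.single j 1) k = 0 := by
    intro s i j hij k
    have hmixed := fun x y => sum_mixed_partials_eq_zero hgC2
      (fun k => ((hlog' k x).sub (hlog' k y)).differentiable two_ne_zero)
      (fun k => (hlog k x).sub (hlog k y)) (hsep x y) s hij
    obtain ⟨-, hprod⟩ := eq_zero_of_forall_sum_sub_mul_eq_zero (hA3 (g s))
      (a := fun k => deriv (fun v => fderiv ℝ g (update s j v) (Pi.single i 1) k) (s j))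
      (b := fun k => fderiv ℝ g s (Pi.single j 1) k * fderiv ℝ g s (Pi.single i 1) k)
      fun x y => by
        rw [← hmixed x y]
        refine Finset.sum_congr rfl fun k _ => ?_
        rw [hw1, hw1, hw2, hw2, deriv_fun_sub ((hlog k x).differentiable two_ne_zero _)
          ((hlog k y).differentiable two_ne_zero _), deriv_deriv_fun_sub (hlog k x) (hlog k y)]
        ring
    simpa [mul_comm] using congrFun hprod k
  obtain ⟨σ, hσ⟩ := exists_perm_apply_eq_of_fderiv_single_mul_eq_zero (hgC2.of_le one_le_two)
    (bijective_fderiv_of_leftInverse_of_rightInverse (hC2.differentiable two_ne_zero)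
      (hgC2.differentiable two_ne_zero) hgh hhg) hrow
  obtain ⟨φ, hφ, hcoord⟩ := exists_injective_apply_eq_of_leftInverse hgh hhg σ hσ
  exact ⟨σ.symm, φ, hφ, hcoord⟩
end

section
/- Let n ≥ 1, let T be a nonempty preconnected topological space, and let M : T → Matrix (Fin n) (Fin n) ℝ be continuous such that for every t ∈ T the matrix M t is invertible and for every row index k and all column indices i ≠ j one has (M t) k i * (M t) k j = 0. Then there exists a single permutation σ of Fin n such that for every t ∈ T, every k, and every j ≠ σ k, (M t) k j = 0, and (M t) k (σ k) ≠ 0. -/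
/-- The permutation pattern of a continuously varying family of invertible
generalized-permutation matrices over a nonempty preconnected space is
constant. -/
theorem generalized_permutation_pattern_constant
    (n : ℕ) (hn : 1 ≤ n)
    (T : Type*) [TopologicalSpace T] [Nonempty T] [PreconnectedSpace T]
    (M : T → Matrix (Fin n) (Fin n) ℝ)
    (hcont : Continuous M)
    (hinv : ∀ t : T, IsUnit (M t).det)
    (hrow : ∀ (t : T) (k i j : Fin n), i ≠ j → M t k i * M t k j = 0) :
    ∃ σ : Equiv.Perm (Fin n),
      ∀ (t : T) (k : Fin n),
        (∀ j : Fin n, j ≠ σ k → M t k j = 0) ∧ M t k (σ k) ≠ 0 := by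
  -- each row has a unique nonzero entry
  have hexu : ∀ (t : T) (k : Fin n), ∃! j : Fin n, M t k j ≠ 0 := by
    intro t k
    have hne : ∃ j, M t k j ≠ 0 := by
      by_contra h
      push_neg at h
      exact (hinv t).ne_zero (Matrix.det_eq_zero_of_row_eq_zero k h)
    obtain ⟨j, hj⟩ := hne
    refine ⟨j, hj, fun j' hj' => ?_⟩
    by_contra hne'
    exact hj' (mul_eq_zero.mp (hrow t k j' j hne') |>.resolve_right hj)
  classical
  let f : T → Fin n → Fin n := fun t k => (hexu t k).choose
  have hf1 : ∀ t k, M t k (f t k) ≠ 0 := fun t k => (hexu t k).choose_spec.1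
  have hf2 : ∀ t k j, M t k j ≠ 0 → j = f t k := fun t k j h =>
    (hexu t k).choose_spec.2 j h
  -- f t k = j ↔ M t k j ≠ 0
  have hfiff : ∀ t k j, f t k = j ↔ M t k j ≠ 0 := by
    intro t k j
    constructor
    · rintro rfl; exact hf1 t k
    · intro h; exact (hf2 t k j h).symm
  -- locally constant in t
  have hlc : ∀ k : Fin n, IsLocallyConstant (fun t => f t k) := by
    intro k
    rw [IsLocallyConstant.iff_isOpen_fiber]
    intro j
    have : (fun t => f t k) ⁻¹' {j} = {t | M t k j ≠ 0} := by
      ext t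
      simp [hfiff t k j]
    rw [this]
    exact isOpen_compl_iff.mpr (isClosed_eq (hcont.matrix_elem k j) continuous_const)
  obtain ⟨t0⟩ := (inferInstance : Nonempty T)
  have hconst : ∀ t k, f t k = f t0 k := fun t k =>
    (hlc k).apply_eq_of_preconnectedSpace t t0
  -- f t0 is bijective
  have hsurj : Function.Surjective (f t0) := by
    intro j
    by_contra h
    push_neg at h
    refine (hinv t0).ne_zero (Matrix.det_eq_zero_of_column_eq_zero j fun k => ?_)
    by_contra hne
    exact h k (((hfiff t0 k j).mpr hne))
  have hbij : Function.Bijective (f t0) :=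
    ⟨Finite.injective_iff_surjective.mpr hsurj, hsurj⟩
  refine ⟨Equiv.ofBijective _ hbij, fun t k => ?_⟩
  have hσ : (Equiv.ofBijective _ hbij) k = f t0 k := rfl
  constructor
  · intro j hj
    by_contra hne
    exact hj (by rw [hσ, ← hconst t k]; exact hf2 t k j hne)
  · rw [hσ, ← hconst t k]; exact hf1 t k
end

section
/- Let n ≥ 1 and let h : (Fin n → ℝ) → (Fin n → ℝ) be continuously differentiable (C¹) such that at every point s the derivative fderiv ℝ h s is an invertible linear map, and for every point s, every k ∈ Fin n, and all i ≠ j in Fin n the product of directional derivatives (fderiv ℝ h s (Pi.single i 1) k) * (fderiv ℝ h s (Pi.single j 1) k) = 0. Then there exist a permutation σ of Fin n and functions φ_k : ℝ → ℝ, each differentiable with nowhere-vanishing derivative (hence injective), such that h(s) k = φ_k (s (σ k)) for every s and k. -/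
/-!
For each row `k`, the Jacobian entries `s ↦ ∂ⱼ hₖ(s)` are continuous functions on the
connected space `ℝⁿ` with pairwise disjoint supports, and these supports cover `ℝⁿ` because
the Jacobian is invertible. A clopen argument then singles out one column `σ k` whose entry
never vanishes, while all other entries of the row vanish identically. So `hₖ` depends on
`s (σ k)` only, and `σ` is injective because the Jacobian is invertible. Taking
`φₖ t = hₖ (t, …, t)`, the derivative of `φₖ` is the nonvanishing entry, so by Darboux's
theorem `φₖ` is strictly monotone.
-/

open Function Set

theorem exists_forall_ne_zero_of_pairwise_disjoint_support {X ι M : Type*}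
    [TopologicalSpace X] [PreconnectedSpace X] [Nonempty X]
    [TopologicalSpace M] [T1Space M] [Zero M] (f : ι → X → M) (hf : ∀ i, Continuous (f i))
    (hdisj : Pairwise fun i j => Disjoint (support (f i)) (support (f j)))
    (hcover : ∀ x, ∃ i, f i x ≠ 0) :
    ∃ i, (∀ x, f i x ≠ 0) ∧ ∀ j ≠ i, f j = 0 := by
  obtain ⟨i, hi⟩ := hcover (Classical.arbitrary X)
  have hcompl : support (f i) = (⋃ j ∈ ({i}ᶜ : Set ι), support (f j))ᶜ := by
    ext x
    simp only [mem_compl_iff, mem_iUnion, not_exists]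
    refine ⟨fun hx j hj hxj => disjoint_left.1 (hdisj hj) hxj hx, fun hx => ?_⟩
    obtain ⟨j, hj⟩ := hcover x
    by_contra hxi
    exact hx j (fun hji => hxi (hji ▸ hj)) hj
  have hclopen : IsClopen (support (f i)) :=
    ⟨hcompl ▸ (isOpen_biUnion fun j _ => (hf j).isOpen_support).isClosed_compl,
      (hf i).isOpen_support⟩
  have huniv := hclopen.eq_univ ⟨_, hi⟩
  refine ⟨i, fun x => (huniv.symm ▸ mem_univ x : x ∈ support (f i)),
    fun j hj => support_eq_empty_iff.1 ?_⟩
  simpa [huniv] using hdisj hj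

section LinearAlgebra

variable {R ι κ F : Type*} [CommRing R] [Fintype ι] [DecidableEq ι]
  [FunLike F (ι → R) (κ → R)] [LinearMapClass F R (ι → R) (κ → R)]

theorem apply_eq_sum_mul_apply_single (L : F) (v : ι → R) (k : κ) :
    L v k = ∑ j, v j * L (Pi.single j 1) k := by
  conv_lhs => rw [← Finset.univ_sum_single v]
  simp only [map_sum, Finset.sum_apply]
  refine Finset.sum_congr rfl fun j _ => ?_
  rw [← smul_eq_mul, ← Pi.smul_apply, ← map_smul, ← Pi.single_smul', smul_eq_mul, mul_one]

theorem apply_eq_mul_of_apply_single_eq_zero (L : F) {k : κ} {i : ι}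
    (h0 : ∀ j ≠ i, L (Pi.single j 1) k = 0) (v : ι → R) :
    L v k = v i * L (Pi.single i 1) k := by
  rw [apply_eq_sum_mul_apply_single L,
    Fintype.sum_eq_single i fun j hj => by rw [h0 j hj, mul_zero]]

variable [Nontrivial R] {L : F}

theorem Function.Surjective.exists_apply_single_ne_zero (hL : Surjective L) (k : κ) :
    ∃ j, L (Pi.single j 1) k ≠ 0 := by
  classical
  by_contra! h0
  obtain ⟨v, hv⟩ := hL (Pi.single k 1)
  simpa [hv, h0] using apply_eq_sum_mul_apply_single L v k

theorem Function.Surjective.injective_of_apply_single_eq_zero [DecidableEq κ]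
    (hL : Surjective L) {g : κ → ι} (h0 : ∀ k, ∀ j ≠ g k, L (Pi.single j 1) k = 0) :
    Injective g := by
  intro k k' hg
  by_contra hk
  obtain ⟨v, hv⟩ := hL (Pi.single k 1)
  obtain ⟨w, hw⟩ := hL (Pi.single k' 1)
  have hvk := apply_eq_mul_of_apply_single_eq_zero L (h0 k) v
  have hvk' := apply_eq_mul_of_apply_single_eq_zero L (h0 k') v
  have hwk' := apply_eq_mul_of_apply_single_eq_zero L (h0 k') w
  simp only [hv, hw, Pi.single_eq_same, Pi.single_eq_of_ne' hk, ← hg] at hvk hvk' hwk'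
  set c := L (Pi.single (g k) 1)
  exact one_ne_zero (α := R)
    (by linear_combination hvk + v (g k) * c k * hwk' - w (g k) * c k * hvk')

end LinearAlgebra

theorem injective_of_deriv_ne_zero {f : ℝ → ℝ} (hf : ∀ x, deriv f x ≠ 0) :
    Injective f := by
  have hderiv x (_ : x ∈ univ) : HasDerivWithinAt f (deriv f x) univ x :=
    (differentiableAt_of_deriv_ne_zero (hf x)).hasDerivAt.hasDerivWithinAt
  rcases hasDerivWithinAt_forall_lt_or_forall_gt_of_forall_ne convex_univ hderiv
    (fun x _ => hf x) with hneg | hpos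
  · exact (strictAnti_of_deriv_neg fun x => hneg x trivial).injective
  · exact (strictMono_of_deriv_pos fun x => hpos x trivial).injective

theorem apply_add_eq_of_hasFDerivAt {E F : Type*} [NormedAddCommGroup E] [NormedSpace ℝ E]
    [NormedAddCommGroup F] [NormedSpace ℝ F] {f : E → F} {f' : E → E →L[ℝ] F}
    (hf : ∀ x, HasFDerivAt f (f' x) x) {v : E} (hv : ∀ x, f' x v = 0) (x : E) :
    f (x + v) = f x := by
  have hline t : HasDerivAt (fun t : ℝ => f (x + t • v)) 0 t := by
    have := (hf _).comp_hasDerivAt t (((hasDerivAt_id t).smul_const v).const_add x)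
    simpa [hv, Function.comp_def] using this
  simpa using is_const_of_deriv_eq_zero (fun t => (hline t).differentiableAt)
    (fun t => (hline t).deriv) 1 0

section Calculus

variable {ι κ : Type*} [Fintype ι] [DecidableEq ι] {f : (ι → ℝ) → (κ → ℝ)}
  {k : κ} {i : ι}

theorem apply_eq_apply_const_of_fderiv_apply_single_eq_zero (hf : Differentiable ℝ f)
    (h0 : ∀ s, ∀ j ≠ i, fderiv ℝ f s (Pi.single j 1) k = 0) (s : ι → ℝ) :
    f s k = f (fun _ => s i) k := by
  have hfk x :
      HasFDerivAt (fun s => f s k) ((ContinuousLinearMap.proj k).comp (fderiv ℝ f x)) x :=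
    hasFDerivAt_pi'.1 (hf x).hasFDerivAt k
  have hv x : (ContinuousLinearMap.proj k).comp (fderiv ℝ f x) ((fun _ => s i) - s) = 0 := by
    rw [ContinuousLinearMap.comp_apply, ContinuousLinearMap.proj_apply,
      apply_eq_mul_of_apply_single_eq_zero (fderiv ℝ f x) (h0 x), Pi.sub_apply, sub_self,
      zero_mul]
  simpa using (apply_add_eq_of_hasFDerivAt hfk hv s).symm

theorem hasDerivAt_apply_const_of_fderiv_apply_single_eq_zero [Fintype κ]
    (hf : Differentiable ℝ f) (h0 : ∀ s, ∀ j ≠ i, fderiv ℝ f s (Pi.single j 1) k = 0)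
    (t : ℝ) :
    HasDerivAt (fun t => f (fun _ => t) k) (fderiv ℝ f (fun _ => t) (Pi.single i 1) k) t := by
  have hconst : HasDerivAt (fun t : ℝ => fun _ : ι => t) (fun _ => 1) t :=
    hasDerivAt_pi.2 fun _ => hasDerivAt_id t
  have := hasDerivAt_pi.1 ((hf _).hasFDerivAt.comp_hasDerivAt t hconst) k
  rwa [apply_eq_mul_of_apply_single_eq_zero (fderiv ℝ f _) (h0 _), one_mul] at this

end Calculus

theorem jacobian_generalized_permutation_implies_componentwise_general
    (n : ℕ)
    (h : (Fin n → ℝ) → (Fin n → ℝ))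
    (hC1 : ContDiff ℝ 1 h)
    (hinv : ∀ s : Fin n → ℝ, Function.Bijective (fderiv ℝ h s))
    (hcross : ∀ (s : Fin n → ℝ) (k i j : Fin n), i ≠ j →
      fderiv ℝ h s (Pi.single i 1) k * fderiv ℝ h s (Pi.single j 1) k = 0) :
    ∃ (σ : Equiv.Perm (Fin n)) (φ : Fin n → ℝ → ℝ),
      (∀ k : Fin n, Differentiable ℝ (φ k)) ∧
      (∀ (k : Fin n) (x : ℝ), deriv (φ k) x ≠ 0) ∧
      (∀ k : Fin n, Function.Injective (φ k)) ∧
      ∀ (s : Fin n → ℝ) (k : Fin n), h s k = φ k (s (σ k)) := by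
  have hdiff : Differentiable ℝ h := hC1.differentiable one_ne_zero
  have hcont k j : Continuous fun s => fderiv ℝ h s (Pi.single j 1) k :=
    (continuous_apply k).comp ((hC1.continuous_fderiv one_ne_zero).clm_apply continuous_const)
  have hrow k : ∃ j, (∀ s, fderiv ℝ h s (Pi.single j 1) k ≠ 0) ∧
      ∀ i ≠ j, (fun s => fderiv ℝ h s (Pi.single i 1) k) = 0 :=
    exists_forall_ne_zero_of_pairwise_disjoint_support _ (hcont k)
      (fun i j hij => disjoint_left.2 fun s hi hj => mul_ne_zero hi hj (hcross s k i j hij))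
      (fun s => (hinv s).2.exists_apply_single_ne_zero k)
  choose g hg_ne hg_zero using hrow
  have hzero k : ∀ s, ∀ j ≠ g k, fderiv ℝ h s (Pi.single j 1) k = 0 :=
    fun s j hj => congrFun (hg_zero k j hj) s
  have hφ k t := hasDerivAt_apply_const_of_fderiv_apply_single_eq_zero hdiff (hzero k) t
  have hφ_ne k t : deriv (fun t => h (fun _ => t) k) t ≠ 0 := (hφ k t).deriv ▸ hg_ne k _
  have hg : Bijective g :=
    ((hinv 0).2.injective_of_apply_single_eq_zero (hzero · 0)).bijective_of_finite
  exact ⟨Equiv.ofBijective g hg, fun k t => h (fun _ => t) k,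
    fun k t => (hφ k t).differentiableAt, hφ_ne, fun k => injective_of_deriv_ne_zero (hφ_ne k),
    fun s k => apply_eq_apply_const_of_fderiv_apply_single_eq_zero hdiff (hzero k) s⟩

/-- The concluding step of the proof of Theorem 1: a `C¹` map whose Jacobian
is everywhere invertible and whose rows each contain at most one nonzero
entry (the cross products of partial derivatives of every component vanish)
is a fixed coordinate permutation followed by component-wise invertible
scalar functions. -/
theorem jacobian_generalized_permutation_implies_componentwise
    (n : ℕ) (hn : 1 ≤ n)
    (h : (Fin n → ℝ) → (Fin n → ℝ))
    (hC1 : ContDiff ℝ 1 h)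
    (hinv : ∀ s : Fin n → ℝ, Function.Bijective (fderiv ℝ h s))
    (hcross : ∀ (s : Fin n → ℝ) (k i j : Fin n), i ≠ j →
      fderiv ℝ h s (Pi.single i 1) k * fderiv ℝ h s (Pi.single j 1) k = 0) :
    ∃ (σ : Equiv.Perm (Fin n)) (φ : Fin n → ℝ → ℝ),
      (∀ k : Fin n, Differentiable ℝ (φ k)) ∧
      (∀ (k : Fin n) (x : ℝ), deriv (φ k) x ≠ 0) ∧
      (∀ k : Fin n, Function.Injective (φ k)) ∧
      ∀ (s : Fin n → ℝ) (k : Fin n), h s k = φ k (s (σ k)) :=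
  jacobian_generalized_permutation_implies_componentwise_general n h hC1 hinv hcross
end

section
/- Let m, k, d ≥ 1, let A be a topological space, and let g : ((Fin m → ℝ) × (Fin k → ℝ)) ≃ₜ A be a homeomorphism (the smooth invertible generation process from the semantic-relevant block c and the semantic-irrelevant block s to observations). Let τ : A → (Fin d → ℝ) be continuous and let ρ : (Fin m → ℝ) × ((Fin k → ℝ) × (Fin k → ℝ)) → ℝ be continuous with ρ z > 0 for every z (the joint density of (c, s, s')). If ∫⁻ ENNReal.ofReal (‖τ (g (c, s)) − τ (g (c, s'))‖² * ρ (c, (s, s'))) with respect to Lebesgue measure (volume) over all (c, (s, s')) equals 0, then there exists φ : (Fin m → ℝ) → (Fin d → ℝ) such that τ a = φ ((g.symm a).1) for every a ∈ A; that is, τ depends on an observation only through its semantic-relevant block. -/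
open MeasureTheory

/-- The invariance step in the proof of Theorem 2: an encoder `τ` achieving
zero alignment loss between observations `g (c, s)` and augmentations
`g (c, s')` (only the semantic-irrelevant block is replaced), under an
everywhere positive continuous joint density, factors through the
semantic-relevant block of the inverse generation process. -/
theorem zero_alignment_loss_factors_through_semantic_block
    (m k d : ℕ) (hm : 1 ≤ m) (hk : 1 ≤ k) (hd : 1 ≤ d)
    (A : Type*) [TopologicalSpace A]
    (g : ((Fin m → ℝ) × (Fin k → ℝ)) ≃ₜ A)
    (τ : A → (Fin d → ℝ)) (hτ : Continuous τ)
    (ρ : (Fin m → ℝ) × ((Fin k → ℝ) × (Fin k → ℝ)) → ℝ)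
    (hρcont : Continuous ρ) (hρpos : ∀ z, 0 < ρ z)
    (hloss : ∫⁻ z : (Fin m → ℝ) × ((Fin k → ℝ) × (Fin k → ℝ)),
        ENNReal.ofReal
          (‖τ (g (z.1, z.2.1)) - τ (g (z.1, z.2.2))‖ ^ 2 * ρ z) = 0) :
    ∃ φ : (Fin m → ℝ) → (Fin d → ℝ), ∀ a : A, τ a = φ (g.symm a).1 := by
  set f : (Fin m → ℝ) × ((Fin k → ℝ) × (Fin k → ℝ)) → ℝ :=
    fun z => ‖τ (g (z.1, z.2.1)) - τ (g (z.1, z.2.2))‖ ^ 2 * ρ z with hf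
  have hfcont : Continuous f := by
    apply Continuous.mul _ hρcont
    exact ((hτ.comp (g.continuous.comp (continuous_fst.prodMk
      (continuous_fst.comp continuous_snd)))).sub
      (hτ.comp (g.continuous.comp (continuous_fst.prodMk
      (continuous_snd.comp continuous_snd))))).norm.pow 2
  have hae : (fun z => ENNReal.ofReal (f z)) =ᵐ[volume] 0 := by
    rw [← lintegral_eq_zero_iff]
    · exact hloss
    · exact (ENNReal.continuous_ofReal.comp hfcont).measurable
  have hcont2 : Continuous (fun z => ENNReal.ofReal (f z)) :=
    ENNReal.continuous_ofReal.comp hfcont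
  have hall : ∀ z, ENNReal.ofReal (f z) = 0 := by
    have := (Continuous.ae_eq_iff_eq volume hcont2 continuous_const).mp hae
    intro z; exact congrFun this z
  have hzero : ∀ c s s', τ (g (c, s)) = τ (g (c, s')) := by
    intro c s s'
    have h := hall (c, (s, s'))
    simp only [hf, ENNReal.ofReal_eq_zero] at h
    have hρ := hρpos (c, (s, s'))
    have hn : ‖τ (g (c, s)) - τ (g (c, s'))‖ ^ 2 ≤ 0 := by
      by_contra hc
      push_neg at hc
      nlinarith
    have : ‖τ (g (c, s)) - τ (g (c, s'))‖ = 0 := by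
      nlinarith [norm_nonneg (τ (g (c, s)) - τ (g (c, s')))]
    have := norm_eq_zero.mp this
    exact sub_eq_zero.mp this
  refine ⟨fun c => τ (g (c, 0)), fun a => ?_⟩
  have : a = g ((g.symm a).1, (g.symm a).2) := by simp
  calc τ a = τ (g ((g.symm a).1, (g.symm a).2)) := by rw [← this]
    _ = τ (g ((g.symm a).1, 0)) := hzero _ _ _
end
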